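/- For every real t > 0 and each ε ∈ {1,−1}, the spinors ψ₂⁺ = (0,1,0,1,0,0,0,0) (for ε = +1) and ψ₂⁻ = (1,0,−1,0,0,0,0,0) (for ε = −1) are ∇ᵀ-parallel for the torsion form T₂^ε = −(t/2)·[(ε/2)(η⁺ + 4e₁₂₅ − 2e₁₃₆) + (1/3)(η⁻ + 2e₂₄₅ − e₃₄₆) − (2ε/3)(2e₁₄₇ − e₂₃₇ + e₅₆₇)]; that is, σ(A_i)·ψ₂^ε + Cl(e_i ⌟ T₂^ε)·ψ₂^ε = 0 for every i = 1,…,7, where A₁,…,A₇ are the connection matrices of example (2). -/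

import Mathlib

open Matrix

noncomputable section

/-- `E8 i j` is the 8×8 skew-symmetric matrix sending the `i`-th basis
vector to the `j`-th, the `j`-th to minus the `i`-th, and all others to 0. -/
def E8 (i j : Fin 8) : Matrix (Fin 8) (Fin 8) ℝ :=
  Matrix.single j i 1 - Matrix.single i j 1

/-- The matrices `e₁,…,e₇` of the 7-dimensional spin representation on ℝ⁸
(indices shifted to be 0-based). -/
def g : Fin 7 → Matrix (Fin 8) (Fin 8) ℝ :=
  ![E8 0 7 + E8 1 6 - E8 2 5 - E8 3 4,
    -E8 0 6 + E8 1 7 + E8 2 4 - E8 3 5,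
    -E8 0 5 + E8 1 4 - E8 2 7 + E8 3 6,
    -E8 0 4 - E8 1 5 - E8 2 6 - E8 3 7,
    -E8 0 2 - E8 1 3 + E8 4 6 + E8 5 7,
    E8 0 3 - E8 1 2 - E8 4 7 + E8 5 6,
    E8 0 1 - E8 2 3 - E8 4 5 + E8 6 7]

/-- 7×7 version of `E_{ij}`. -/
def E7 (i j : Fin 7) : Matrix (Fin 7) (Fin 7) ℝ :=
  Matrix.single j i 1 - Matrix.single i j 1

/-- The spin lift `σ(A) = (1/2) Σ_{p<q} a_{pq} e_p e_q` of a skew-symmetric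
7×7 matrix `A = Σ_{p<q} a_{pq} E_{pq}` (so that `a_{pq} = A q p` for `p < q`). -/
def spinLift (A : Matrix (Fin 7) (Fin 7) ℝ) : Matrix (Fin 8) (Fin 8) ℝ :=
  (1/2 : ℝ) • ∑ p : Fin 7, ∑ q : Fin 7, if p < q then A q p • (g p * g q) else 0

/-- Clifford action of the interior product `e_i ⌟ e_{abc}` (for `a<b<c`). -/
def contr (i a b c : Fin 7) : Matrix (Fin 8) (Fin 8) ℝ :=
  (if i = a then g b * g c else 0) - (if i = b then g a * g c else 0) +
    (if i = c then g a * g b else 0)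

/-- The ordered index triples (0-based) of the eleven basis 3-forms spanning `Λ³₁₁`:
`e₁₂₅, e₁₃₆, e₂₄₆, e₃₄₅, e₁₂₆, e₃₄₆, e₁₃₅, e₂₄₅, e₁₄₇, e₅₆₇, e₂₃₇`. -/
def tri : Fin 11 → Fin 7 × Fin 7 × Fin 7 :=
  ![(0,1,4),(0,2,5),(1,3,5),(2,3,4),(0,1,5),(2,3,5),(0,2,4),(1,3,4),(0,3,6),(4,5,6),(1,2,6)]

/-- For `T = Σ_k c_k e_{tri k} ∈ Λ³₁₁`, the Clifford action `Cl(e_i ⌟ T)`. -/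
def clContr (c : Fin 11 → ℝ) (i : Fin 7) : Matrix (Fin 8) (Fin 8) ℝ :=
  ∑ k : Fin 11, c k • contr i (tri k).1 (tri k).2.1 (tri k).2.2

/-- `ψ` is `∇ᵀ`-parallel for connection matrices `A` and torsion `T ∈ Λ³₁₁`
with coefficient vector `c`. -/
def IsParallel (A : Fin 7 → Matrix (Fin 7) (Fin 7) ℝ) (c : Fin 11 → ℝ)
    (ψ : Fin 8 → ℝ) : Prop :=
  ∀ i : Fin 7, (spinLift (A i)).mulVec ψ + (clContr c i).mulVec ψ = 0

/-- Connection matrices of example (2). -/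
def Aex2 (t : ℝ) : Fin 7 → Matrix (Fin 7) (Fin 7) ℝ :=
  ![(-t) • ((2:ℝ) • E7 0 6 + E7 2 4 - E7 1 5),
    (-t) • (E7 0 5 + (2:ℝ) • E7 1 6 + E7 3 4),
    (-t) • (E7 0 4 - E7 2 6),
    (-t) • (E7 1 4 - E7 3 6),
    (-t) • (E7 0 2 + E7 1 3 + (2:ℝ) • E7 4 6),
    (-t) • (E7 0 1 - E7 5 6),
    0]

/-- Coefficient vector of `η⁺ = e₁₂₅+e₁₃₆+e₂₄₆−e₃₄₅`. -/
def etaP : Fin 11 → ℝ := ![1,1,1,-1,0,0,0,0,0,0,0]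

/-- Coefficient vector of `η⁻ = e₁₂₆−e₁₃₅−e₂₄₅−e₃₄₆`. -/
def etaM : Fin 11 → ℝ := ![0,0,0,0,1,-1,-1,-1,0,0,0]

/-- Coefficient vector of the `k`-th basis 3-form of `Λ³₁₁`. -/
def bv (k : Fin 11) : Fin 11 → ℝ := Pi.single k 1

/-- Coefficient vector of the torsion form `T₂^ε`. -/
def T2 (t eps : ℝ) : Fin 11 → ℝ :=
  (-(t/2)) • ((eps/2) • (etaP + (4:ℝ) • bv 0 - (2:ℝ) • bv 1)
    + (1/3 : ℝ) • (etaM + (2:ℝ) • bv 7 - bv 5)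
    - (2*eps/3) • ((2:ℝ) • bv 8 - bv 10 + bv 9))

/-! The verification is finite. Since `σ` is linear with `σ(E_pq) = ½ e_p e_q`, each operator
`σ(A_i) + Cl(e_i ⌟ T₂^ε)` is an explicit combination of products `e_p e_q`, and every generator
`e_a` acts on ℝ⁸ as a signed permutation of the coordinates. Applied to `ψ₂^ε`, each parallelism
equation becomes a linear identity in `t`. -/

lemma spinLift_eq_sum (A : Matrix (Fin 7) (Fin 7) ℝ) :
    spinLift A = (1/2 : ℝ) • ∑ p, ∑ q, A q p • (if p < q then g p * g q else 0) := by
  simp only [spinLift, smul_ite, smul_zero]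

lemma spinLift_add (A B : Matrix (Fin 7) (Fin 7) ℝ) :
    spinLift (A + B) = spinLift A + spinLift B := by
  simp only [spinLift_eq_sum, ← smul_add, ← Finset.sum_add_distrib, Matrix.add_apply, add_smul]

lemma spinLift_sub (A B : Matrix (Fin 7) (Fin 7) ℝ) :
    spinLift (A - B) = spinLift A - spinLift B := by
  simp only [spinLift_eq_sum, ← smul_sub, ← Finset.sum_sub_distrib, Matrix.sub_apply, sub_smul]

lemma spinLift_smul (r : ℝ) (A : Matrix (Fin 7) (Fin 7) ℝ) :
    spinLift (r • A) = r • spinLift A := by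
  simp only [spinLift_eq_sum, smul_comm r, Finset.smul_sum, Matrix.smul_apply, smul_eq_mul, mul_smul]

lemma spinLift_zero : spinLift 0 = 0 := by
  simpa using spinLift_smul 0 0

lemma spinLift_E7 {p q : Fin 7} (hpq : p < q) :
    spinLift (E7 p q) = (1/2 : ℝ) • (g p * g q) := by
  simp only [spinLift_eq_sum, E7, Matrix.sub_apply, Matrix.single_apply, sub_smul, ite_smul,
    one_smul, zero_smul, Finset.sum_sub_distrib, ite_and, Finset.sum_ite_eq, Finset.mem_univ,
    if_true, hpq, hpq.not_gt, if_false, sub_zero]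

lemma g0_mulVec (v : Fin 8 → ℝ) : g 0 *ᵥ v = ![-v 7, -v 6, v 5, v 4, -v 3, -v 2, v 1, v 0] := by
  ext j; fin_cases j <;> simp [g, E8, mulVec, dotProduct, single_apply]

lemma g1_mulVec (v : Fin 8 → ℝ) : g 1 *ᵥ v = ![v 6, -v 7, -v 4, v 5, v 2, -v 3, -v 0, v 1] := by
  ext j; fin_cases j <;> simp [g, E8, mulVec, dotProduct, single_apply]

lemma g2_mulVec (v : Fin 8 → ℝ) : g 2 *ᵥ v = ![v 5, -v 4, v 7, -v 6, v 1, -v 0, v 3, -v 2] := by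
  ext j; fin_cases j <;> simp [g, E8, mulVec, dotProduct, single_apply]

lemma g3_mulVec (v : Fin 8 → ℝ) : g 3 *ᵥ v = ![v 4, v 5, v 6, v 7, -v 0, -v 1, -v 2, -v 3] := by
  ext j; fin_cases j <;> simp [g, E8, mulVec, dotProduct, single_apply]

lemma g4_mulVec (v : Fin 8 → ℝ) : g 4 *ᵥ v = ![v 2, v 3, -v 0, -v 1, -v 6, -v 7, v 4, v 5] := by
  ext j; fin_cases j <;> simp [g, E8, mulVec, dotProduct, single_apply]

lemma g5_mulVec (v : Fin 8 → ℝ) : g 5 *ᵥ v = ![-v 3, v 2, -v 1, v 0, v 7, -v 6, v 5, -v 4] := by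
  ext j; fin_cases j <;> simp [g, E8, mulVec, dotProduct, single_apply]

lemma g6_mulVec (v : Fin 8 → ℝ) : g 6 *ᵥ v = ![-v 1, v 0, v 3, -v 2, v 5, -v 4, -v 7, v 6] := by
  ext j; fin_cases j <;> simp [g, E8, mulVec, dotProduct, single_apply]

lemma T2_eq (t eps : ℝ) : T2 t eps = (-(t/2)) •
    ![5*eps/2, -eps/2, eps/2, -eps/2, 1/3, -2/3, -1/3, 1/3, -4*eps/3, -2*eps/3, 2*eps/3] := by
  ext k
  simp only [T2, etaP, etaM, bv, Pi.add_apply, Pi.sub_apply, Pi.smul_apply, Pi.single_apply, smul_eq_mul]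
  fin_cases k <;>
    simp only [Fin.zero_eta, Fin.mk_one, Fin.reduceFinMk, Fin.isValue, Matrix.cons_val, Fin.reduceEq,
      ↓reduceIte] <;> ring

theorem stmt5_general (t : ℝ) (eps : ℝ) (heps : eps = 1 ∨ eps = -1) :
    IsParallel (Aex2 t) (T2 t eps)
      (if eps = 1 then ![0, 1, 0, 1, 0, 0, 0, 0] else ![1, 0, -1, 0, 0, 0, 0, 0]) := by
  intro i
  fin_cases i <;>
    simp only [Fin.zero_eta, Fin.mk_one, Fin.reduceFinMk, Fin.isValue, Aex2, Matrix.cons_val,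
      spinLift_add, spinLift_sub, spinLift_smul, spinLift_zero, spinLift_E7, Fin.reduceLT,
      clContr, T2_eq, tri, contr, Fin.sum_univ_succ, Fin.sum_univ_zero, Fin.reduceSucc,
      Fin.reduceEq, ↓reduceIte, Pi.smul_apply, zero_add, add_zero, sub_zero, zero_sub, smul_zero,
      add_mulVec, sub_mulVec, neg_mulVec, smul_mulVec, zero_mulVec, ← mulVec_mulVec] <;>
    rcases heps with rfl | rfl <;>
    simp only [if_pos, if_neg (show (-1 : ℝ) ≠ 1 by norm_num), g0_mulVec, g1_mulVec, g2_mulVec,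
      g3_mulVec, g4_mulVec, g5_mulVec, g6_mulVec, Matrix.cons_val, neg_zero, neg_neg,
      Fin.isValue] <;>
    ext j <;> fin_cases j <;>
    simp only [Pi.add_apply, Pi.sub_apply, Pi.smul_apply, Pi.neg_apply, Pi.zero_apply,
      smul_eq_mul, Fin.zero_eta, Fin.mk_one, Fin.reduceFinMk, Fin.isValue, Matrix.cons_val] <;>
    ring

/-- the spinors `ψ₂^ε` are `∇ᵀ`-parallel for `T₂^ε`. -/
theorem stmt5 (t : ℝ) (ht : 0 < t) (eps : ℝ) (heps : eps = 1 ∨ eps = -1) :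
    IsParallel (Aex2 t) (T2 t eps)
      (if eps = 1 then ![0, 1, 0, 1, 0, 0, 0, 0] else ![1, 0, -1, 0, 0, 0, 0, 0]) :=
  stmt5_general t eps heps
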